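/- arXiv:2604.24299 — 8 statements merged into one kernel-verified Lean document; each statement's English description precedes it below -/
import Mathlib

section
/- Let F be ℝ or ℂ, n ≥ 2, σ a nonzero endomorphism of the field F, and let A, B be invertible n×n matrices over F. If for every x ∈ Fⁿ the vectors A·x_σ and B·x_σ are linearly dependent (where x_σ denotes the vector obtained by applying σ to each coordinate of x), then A and B are linearly dependent, i.e., A = λB for some scalar λ. -/
/-- If `A x_σ` and `B x_σ` are linearly dependent for every vector `x`, where `A, B` are
invertible matrices and `σ` is a field endomorphism, then `A` and `B` are linearly
dependent. -/
theorem stmt_1 {F : Type*} [Field F] {n : ℕ} (hn : 2 ≤ n)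
    (σ : F →+* F)
    (A B : Matrix (Fin n) (Fin n) F)
    (hA : IsUnit A.det) (hB : IsUnit B.det)
    (hdep : ∀ x : Fin n → F,
      ¬ LinearIndependent F ![A.mulVec (fun i => σ (x i)), B.mulVec (fun i => σ (x i))]) :
    ∃ lam : F, A = lam • B := by
  have hBinj : Function.Injective B.mulVec :=
    Matrix.mulVec_injective_iff_isUnit.mpr ((Matrix.isUnit_iff_isUnit_det B).mpr hB)
  have key : ∀ x : Fin n → F, (fun i => σ (x i)) = x → x ≠ 0 →
      ∃ c : F, A.mulVec x = c • B.mulVec x := by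
    intro x hx hx0
    have h := hdep x
    rw [hx, LinearIndependent.pair_iff] at h
    push_neg at h
    obtain ⟨s, t, hst, hne⟩ := h
    by_cases hs : s = 0
    · subst hs
      simp only [zero_smul, zero_add] at hst
      have ht : t ≠ 0 := by tauto
      have : B.mulVec x = 0 := by
        have := smul_eq_zero.mp hst
        tauto
      exact absurd (hBinj (by simpa using this)) hx0
    · refine ⟨-t / s, ?_⟩
      have : s • A.mulVec x = (-t) • B.mulVec x := by
        rw [neg_smul]; exact eq_neg_of_add_eq_zero_left hst
      rw [div_eq_mul_inv, mul_comm, ← smul_smul]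
      rw [← this, smul_smul, inv_mul_cancel₀ hs, one_smul]
  -- column lemma
  have hsingle : ∀ i : Fin n, (fun j : Fin n => σ ((Pi.single i (1:F) : Fin n → F) j)) = Pi.single i 1 := by
    intro i; funext j
    rcases eq_or_ne j i with rfl | hji
    · simp
    · simp [Pi.single_eq_of_ne hji]
  have hone : (1 : F) ≠ 0 := one_ne_zero
  have hcol : ∀ i : Fin n, ∃ c : F, A.mulVec (Pi.single i 1) = c • B.mulVec (Pi.single i 1) := by
    intro i
    refine key _ (hsingle i) ?_
    intro h
    have := congrFun h i
    simp at this
  choose c hc using hcol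
  have h0 : (0 : ℕ) < n := by omega
  set i0 : Fin n := ⟨0, h0⟩ with hi0
  refine ⟨c i0, ?_⟩
  -- all c i equal c i0
  have hceq : ∀ i : Fin n, c i = c i0 := by
    intro i
    rcases eq_or_ne i i0 with rfl | hi
    · rfl
    · have hxne : ((Pi.single i0 (1:F) + Pi.single i 1 : Fin n → F)) ≠ 0 := by
        intro h
        have := congrFun h i0
        simp [Pi.single_eq_of_ne (Ne.symm hi)] at this
      have hxσ : (fun j : Fin n => σ ((Pi.single i0 (1:F) + Pi.single i 1 : Fin n → F) j))
          = (Pi.single i0 1 + Pi.single i 1 : Fin n → F) := by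
        funext j
        simp only [Pi.add_apply, map_add]
        rw [congrFun (hsingle i0) j, congrFun (hsingle i) j]
      obtain ⟨d, hd⟩ := key _ hxσ hxne
      rw [Matrix.mulVec_add, hc i0, hc i, Matrix.mulVec_add, smul_add] at hd
      have : B.mulVec ((c i0 - d) • (Pi.single i0 1 : Fin n → F) + (c i - d) • (Pi.single i 1 : Fin n → F)) = 0 := by
        rw [Matrix.mulVec_add, Matrix.mulVec_smul, Matrix.mulVec_smul]
        rw [sub_smul, sub_smul]
        rw [sub_add_sub_comm, hd]
        abel
      have hz := hBinj (this.trans (B.mulVec_zero).symm)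
      have h1 := congrFun hz i
      have h2 := congrFun hz i0
      simp [Pi.single_eq_of_ne hi, Pi.single_eq_of_ne (Ne.symm hi)] at h1 h2
      rw [sub_eq_zero] at h1 h2
      rw [h1, h2]
  -- conclude
  ext j i
  have := congrFun (hc i) j
  rw [Matrix.mulVec_single, Matrix.mulVec_single] at this
  simpa [hceq i, mul_comm] using this
end

section
/- Let F be ℝ or ℂ, n ≥ 2, and let A be an n×n matrix over F that is not a scalar multiple of the identity. Then for every scalar c ∈ F there exist vectors x, y ∈ Fⁿ with ⟨x, y⟩ = 1 and ⟨Ax, y⟩ = c; i.e., {⟨Ax, y⟩ : ⟨x,y⟩ = 1} = F. -/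
open scoped Matrix

/-! A non-scalar endomorphism `f` moves some vector `v` off its own line, so `v` and `f v` are
linearly independent, and a linear functional can then be prescribed freely on them. -/

theorem LinearIndependent.exists_linearMap_apply_eq {ι K V V' : Type*} [Field K]
    [AddCommGroup V] [Module K V] [AddCommGroup V'] [Module K V'] {v : ι → V}
    (hv : LinearIndependent K v) (a : ι → V') :
    ∃ g : V →ₗ[K] V', ∀ i, g (v i) = a i := by
  let b := Module.Basis.span hv
  obtain ⟨g, hg⟩ := LinearMap.exists_extend (b.constr K a)
  refine ⟨g, fun i => ?_⟩
  have hb : (b i : V) = v i := congrArg Subtype.val (Module.Basis.span_apply hv i)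
  rw [← hb, ← Submodule.subtype_apply, ← LinearMap.comp_apply, hg, b.constr_basis]

theorem Module.End.exists_linearIndependent_pair {K V : Type*} [Field K]
    [AddCommGroup V] [Module K V] {f : Module.End K V} (hf : ∀ a : K, f ≠ a • 1) :
    ∃ v, LinearIndependent K ![v, f v] := by
  by_contra! h
  obtain ⟨a, rfl⟩ := LinearMap.exists_eq_smul_id_of_forall_notLinearIndependent h
  exact hf a rfl

theorem Module.End.exists_dual_apply_eq_one_and_apply_eq {K V : Type*} [Field K]
    [AddCommGroup V] [Module K V] {f : Module.End K V} (hf : ∀ a : K, f ≠ a • 1) (c : K) :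
    ∃ (v : V) (φ : Module.Dual K V), φ v = 1 ∧ φ (f v) = c := by
  obtain ⟨v, hv⟩ := Module.End.exists_linearIndependent_pair hf
  obtain ⟨φ, hφ⟩ := hv.exists_linearMap_apply_eq ![1, c]
  exact ⟨v, φ, hφ 0, hφ 1⟩

theorem stmt_2_general {F : Type*} [Field F] {n : ℕ}
    (A : Matrix (Fin n) (Fin n) F)
    (hA : ∀ c : F, A ≠ c • (1 : Matrix (Fin n) (Fin n) F)) :
    ∀ c : F, ∃ x y : Fin n → F, y ⬝ᵥ x = 1 ∧ y ⬝ᵥ A.mulVec x = c := by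
  intro c
  have hf : ∀ a : F, Matrix.toLin' A ≠ a • 1 := fun a h =>
    hA a (Matrix.toLin'.injective (by rw [h, map_smul, Matrix.toLin'_one]; rfl))
  obtain ⟨x, φ, hx, hAx⟩ := Module.End.exists_dual_apply_eq_one_and_apply_eq hf c
  refine ⟨x, (dotProductEquiv F (Fin n)).symm φ, ?_, ?_⟩
  all_goals
    rw [← dotProductEquiv_apply_apply, LinearEquiv.apply_symm_apply]
    assumption

/-- If `A` is not a scalar multiple of the identity, then `{yᵗAx : yᵗx = 1}` is all of `F`. -/
theorem stmt_2 {F : Type*} [Field F] {n : ℕ} (hn : 2 ≤ n)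
    (A : Matrix (Fin n) (Fin n) F)
    (hA : ∀ c : F, A ≠ c • (1 : Matrix (Fin n) (Fin n) F)) :
    ∀ c : F, ∃ x y : Fin n → F, y ⬝ᵥ x = 1 ∧ y ⬝ᵥ A.mulVec x = c :=
  stmt_2_general A hA
end

section
/- For n ≥ 1, define ℳ¹ to be the set of multiplicative functions g : ℝ* → ℝ* such that λ ↦ g(λ)ⁿλ is an automorphism of the multiplicative group ℝ*. Then g ∈ ℳ¹ if and only if: there exists a bijective additive function a : ℝ → ℝ with g(μ) = μ^(-1/n)·exp(a(log μ)) for all μ > 0, and if n is odd then g(μ) = g(-μ) for all μ < 0, while if n is even then either g(μ) = -g(-μ) for all μ < 0 or g(μ) = g(-μ) for all μ < 0. -/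
/-- `f` is an automorphism of the multiplicative group `ℝ* = ℝ \ {0}` (as a self-map of
`ℝ`, only values at nonzero points being relevant). -/
def IsMulAutoRStar (f : ℝ → ℝ) : Prop :=
  Set.BijOn f {x : ℝ | x ≠ 0} {x : ℝ | x ≠ 0} ∧
    ∀ x y : ℝ, x ≠ 0 → y ≠ 0 → f (x * y) = f x * f y

/-- `g` belongs to the class `ℳ¹`: it is a multiplicative self-map of `ℝ*` such that
`λ ↦ g(λ)ⁿ λ` is an automorphism of `ℝ*`. -/
def MemM1 (n : ℕ) (g : ℝ → ℝ) : Prop :=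
  (∀ x : ℝ, x ≠ 0 → g x ≠ 0) ∧
    (∀ x y : ℝ, x ≠ 0 → y ≠ 0 → g (x * y) = g x * g y) ∧
    IsMulAutoRStar (fun lam => g lam ^ n * lam)

/-- Characterization of the elements of `ℳ¹` via bijective additive functions on `ℝ`
and sign conditions on the negative half-line. -/
theorem stmt_7 (n : ℕ) (hn : 1 ≤ n) (g : ℝ → ℝ) :
    MemM1 n g ↔
      ((∃ a : ℝ → ℝ, Function.Bijective a ∧ (∀ x y : ℝ, a (x + y) = a x + a y) ∧
          ∀ μ : ℝ, 0 < μ → g μ = μ ^ (-(1 : ℝ) / n) * Real.exp (a (Real.log μ))) ∧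
        (Odd n → ∀ μ : ℝ, μ < 0 → g μ = g (-μ)) ∧
        (Even n → (∀ μ : ℝ, μ < 0 → g μ = -g (-μ)) ∨ (∀ μ : ℝ, μ < 0 → g μ = g (-μ)))) := by
  have hn0 : (n : ℝ) ≠ 0 := Nat.cast_ne_zero.2 (by omega)
  constructor
  · rintro ⟨hg0, hgm, hbij, hfm⟩
    have hinj : ∀ x y : ℝ, x ≠ 0 → y ≠ 0 → g x ^ n * x = g y ^ n * y → x = y :=
      fun x y hx hy h => hbij.2.1 hx hy h
    have hsurj : ∀ y : ℝ, y ≠ 0 → ∃ x : ℝ, x ≠ 0 ∧ g x ^ n * x = y := by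
      intro y hy
      obtain ⟨x, hx, hfx⟩ := hbij.2.2 hy
      exact ⟨x, hx, hfx⟩
    have hg1 : g 1 = 1 := by
      have h := hgm 1 1 one_ne_zero one_ne_zero
      rw [mul_one] at h
      exact (mul_left_cancel₀ (hg0 1 one_ne_zero) (by rw [mul_one, ← h])).symm
    have hgpos : ∀ μ : ℝ, 0 < μ → 0 < g μ := by
      intro μ hμ
      have hs : Real.sqrt μ ≠ 0 := (Real.sqrt_pos.2 hμ).ne'
      have h2 := hgm (Real.sqrt μ) (Real.sqrt μ) hs hs
      rw [Real.mul_self_sqrt hμ.le] at h2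
      rw [h2]
      exact mul_self_pos.2 (hg0 _ hs)
    have hgm1 : g (-1) = 1 ∨ g (-1) = -1 := by
      have h := hgm (-1) (-1) (by norm_num) (by norm_num)
      rw [show ((-1 : ℝ) * (-1)) = 1 by norm_num, hg1] at h
      rcases mul_eq_zero.1 (show (g (-1) - 1) * (g (-1) + 1) = 0 by nlinarith) with h' | h'
      · left; linarith
      · right; linarith
    have hpow : g (-1) ^ n = 1 := by
      rcases hgm1 with h | h
      · rw [h, one_pow]
      · rcases Nat.even_or_odd n with he | ho
        · rw [h, he.neg_one_pow]
        · exfalso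
          have h1 : g (-1 : ℝ) ^ n * (-1) = g (1 : ℝ) ^ n * 1 := by
            rw [h, ho.neg_one_pow, hg1, one_pow]; norm_num
          have := hinj (-1) 1 (by norm_num) one_ne_zero h1
          norm_num at this
    have hfpos : ∀ μ : ℝ, 0 < μ → 0 < g μ ^ n * μ := by
      intro μ hμ
      have := hgpos μ hμ
      positivity
    have hexp : ∀ t : ℝ, Real.exp ((n : ℝ) * (Real.log (g (Real.exp t)) + t / n))
        = g (Real.exp t) ^ n * Real.exp t := by
      intro t
      have h1 : 0 < g (Real.exp t) := hgpos _ (Real.exp_pos t)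
      rw [mul_add, mul_div_cancel₀ _ hn0, Real.exp_add, Real.exp_nat_mul, Real.exp_log h1]
    refine ⟨⟨fun t => Real.log (g (Real.exp t)) + t / n, ⟨?_, ?_⟩, ?_, ?_⟩, ?_, ?_⟩
    · -- injective
      intro t1 t2 h
      simp only at h
      have h2 : g (Real.exp t1) ^ n * Real.exp t1 = g (Real.exp t2) ^ n * Real.exp t2 := by
        rw [← hexp, ← hexp, h]
      exact Real.exp_injective (hinj _ _ (Real.exp_ne_zero t1) (Real.exp_ne_zero t2) h2)
    · -- surjective
      intro y
      obtain ⟨x, hx, hfx⟩ := hsurj (Real.exp ((n : ℝ) * y)) (Real.exp_ne_zero _)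
      have hxpos : 0 < x := by
        rcases lt_or_gt_of_ne hx with hx' | hx'
        · exfalso
          have h1 := hfm (-1) (-x) (by norm_num) (by linarith)
          simp only at h1
          rw [show ((-1 : ℝ) * (-x)) = x by ring, hpow] at h1
          have h2 : g x ^ n * x = -(g (-x) ^ n * (-x)) := by rw [h1]; ring
          have h3 := hfpos (-x) (by linarith)
          have h4 := Real.exp_pos ((n : ℝ) * y)
          rw [hfx] at h2
          linarith
        · exact hx'
      refine ⟨Real.log x, ?_⟩
      simp only
      have h5 : Real.exp ((n : ℝ) * (Real.log (g (Real.exp (Real.log x)))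
          + Real.log x / n)) = Real.exp ((n : ℝ) * y) := by
        rw [hexp, Real.exp_log hxpos, hfx]
      exact mul_left_cancel₀ hn0 (Real.exp_injective h5)
    · -- additive
      intro x y
      simp only
      have hx := Real.exp_pos x
      have hy := Real.exp_pos y
      rw [Real.exp_add, hgm _ _ hx.ne' hy.ne',
        Real.log_mul (hgpos _ hx).ne' (hgpos _ hy).ne']
      ring
    · -- formula
      intro μ hμ
      simp only
      rw [Real.exp_add, Real.exp_log hμ, Real.exp_log (hgpos μ hμ), Real.rpow_def_of_pos hμ]
      have h2 : Real.exp (Real.log μ * (-(1 : ℝ) / n)) * Real.exp (Real.log μ / n) = 1 := by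
        rw [← Real.exp_add, show Real.log μ * (-(1 : ℝ) / n) + Real.log μ / n = 0 by ring,
          Real.exp_zero]
      linear_combination (-(g μ)) * h2
    · -- odd case
      intro ho μ hμ
      have hgm1' : g (-1) = 1 := by
        rcases hgm1 with h | h
        · exact h
        · exfalso; rw [h, ho.neg_one_pow] at hpow; norm_num at hpow
      have h := hgm (-1) (-μ) (by norm_num) (by linarith)
      rw [show ((-1 : ℝ) * (-μ)) = μ by ring, hgm1', one_mul] at h
      exact h
    · -- even case
      intro _
      rcases hgm1 with h | h
      · right
        intro μ hμ
        have h2 := hgm (-1) (-μ) (by norm_num) (by linarith)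
        rw [show ((-1 : ℝ) * (-μ)) = μ by ring, h, one_mul] at h2
        exact h2
      · left
        intro μ hμ
        have h2 := hgm (-1) (-μ) (by norm_num) (by linarith)
        rw [show ((-1 : ℝ) * (-μ)) = μ by ring, h] at h2
        rw [h2]; ring
  · rintro ⟨⟨a, ⟨hainj, hasurj⟩, haadd, hform⟩, hodd, heven⟩
    obtain ⟨ε, hε1, hεn, hεneg⟩ : ∃ ε : ℝ, (ε = 1 ∨ ε = -1) ∧ ε ^ n = 1 ∧
        ∀ μ : ℝ, μ < 0 → g μ = ε * g (-μ) := by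
      rcases Nat.even_or_odd n with he | ho
      · rcases heven he with h | h
        · exact ⟨-1, Or.inr rfl, he.neg_one_pow, fun μ hμ => by rw [h μ hμ]; ring⟩
        · exact ⟨1, Or.inl rfl, one_pow n, fun μ hμ => by rw [h μ hμ]; ring⟩
      · exact ⟨1, Or.inl rfl, one_pow n, fun μ hμ => by rw [hodd ho μ hμ]; ring⟩
    have hgpos : ∀ μ : ℝ, 0 < μ → 0 < g μ := by
      intro μ hμ
      rw [hform μ hμ]
      positivity
    have hε0 : ε ≠ 0 := by rcases hε1 with h | h <;> rw [h] <;> norm_num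
    have hg0 : ∀ x : ℝ, x ≠ 0 → g x ≠ 0 := by
      intro x hx
      rcases lt_or_gt_of_ne hx with h | h
      · rw [hεneg x h]
        exact mul_ne_zero hε0 (hgpos _ (by linarith)).ne'
      · exact (hgpos x h).ne'
    have hmp : ∀ x y : ℝ, 0 < x → 0 < y → g (x * y) = g x * g y := by
      intro x y hx hy
      rw [hform _ (mul_pos hx hy), hform _ hx, hform _ hy, Real.log_mul hx.ne' hy.ne',
        haadd, Real.exp_add, Real.mul_rpow hx.le hy.le]
      ring
    have hgm : ∀ x y : ℝ, x ≠ 0 → y ≠ 0 → g (x * y) = g x * g y := by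
      intro x y hx hy
      rcases lt_or_gt_of_ne hx with hx' | hx' <;> rcases lt_or_gt_of_ne hy with hy' | hy'
      · rw [show x * y = (-x) * (-y) by ring, hmp _ _ (by linarith) (by linarith),
          hεneg x hx', hεneg y hy']
        rcases hε1 with h | h <;> rw [h] <;> ring
      · have hxy : x * y < 0 := mul_neg_of_neg_of_pos hx' hy'
        rw [hεneg _ hxy, show -(x * y) = (-x) * y by ring,
          hmp _ _ (by linarith) hy', hεneg x hx']
        ring
      · have hxy : x * y < 0 := mul_neg_of_pos_of_neg hx' hy'
        rw [hεneg _ hxy, show -(x * y) = x * (-y) by ring,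
          hmp _ _ hx' (by linarith), hεneg y hy']
        ring
      · exact hmp x y hx' hy'
    have hfexp : ∀ μ : ℝ, 0 < μ → g μ ^ n * μ = Real.exp ((n : ℝ) * a (Real.log μ)) := by
      intro μ hμ
      rw [hform μ hμ, mul_pow, ← Real.rpow_natCast (μ ^ (-(1 : ℝ) / (n : ℝ))) n,
        ← Real.rpow_mul hμ.le, show (-(1 : ℝ) / (n : ℝ)) * (n : ℝ) = -1 by field_simp,
        Real.rpow_neg_one, ← Real.exp_nat_mul]
      field_simp
    have hfodd : ∀ x : ℝ, x < 0 → g x ^ n * x = -(g (-x) ^ n * (-x)) := by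
      intro x hx
      rw [hεneg x hx, mul_pow, hεn]
      ring
    have hfpos : ∀ x : ℝ, 0 < x → 0 < g x ^ n * x := by
      intro x hx
      rw [hfexp x hx]
      exact Real.exp_pos _
    refine ⟨hg0, hgm, ⟨⟨?_, ?_, ?_⟩, ?_⟩⟩
    · -- MapsTo
      intro x hx
      simp only [Set.mem_setOf_eq] at hx ⊢
      exact mul_ne_zero (pow_ne_zero n (hg0 x hx)) hx
    · -- InjOn
      intro x hx y hy h
      simp only [Set.mem_setOf_eq] at hx hy
      change g x ^ n * x = g y ^ n * y at h
      have key : ∀ u v : ℝ, 0 < u → 0 < v → g u ^ n * u = g v ^ n * v → u = v := by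
        intro u v hu hv huv
        rw [hfexp u hu, hfexp v hv] at huv
        have h2 : a (Real.log u) = a (Real.log v) :=
          mul_left_cancel₀ hn0 (Real.exp_injective huv)
        have h3 := hainj h2
        rw [← Real.exp_log hu, ← Real.exp_log hv, h3]
      rcases lt_or_gt_of_ne hx with hx' | hx' <;> rcases lt_or_gt_of_ne hy with hy' | hy'
      · have h1 := hfodd x hx'
        have h2 := hfodd y hy'
        have h3 := key (-x) (-y) (by linarith) (by linarith) (by linarith)
        linarith
      · exfalso
        have h1 := hfodd x hx'
        have h2 := hfpos (-x) (by linarith)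
        have h3 := hfpos y hy'
        linarith
      · exfalso
        have h1 := hfodd y hy'
        have h2 := hfpos (-y) (by linarith)
        have h3 := hfpos x hx'
        linarith
      · exact key x y hx' hy' h
    · -- SurjOn
      intro y hy
      simp only [Set.mem_setOf_eq] at hy
      have key : ∀ z : ℝ, 0 < z → ∃ x : ℝ, 0 < x ∧ g x ^ n * x = z := by
        intro z hz
        obtain ⟨t, ht⟩ := hasurj (Real.log z / n)
        refine ⟨Real.exp t, Real.exp_pos t, ?_⟩
        rw [hfexp _ (Real.exp_pos t), Real.log_exp, ht, mul_div_cancel₀ _ hn0,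
          Real.exp_log hz]
      rcases lt_or_gt_of_ne hy with hy' | hy'
      · obtain ⟨x, hx, hfx⟩ := key (-y) (by linarith)
        refine ⟨-x, ?_, ?_⟩
        · simp only [Set.mem_setOf_eq]
          exact neg_ne_zero.mpr hx.ne'
        · change g (-x) ^ n * (-x) = y
          rw [hfodd (-x) (by linarith)]
          simp only [neg_neg]
          rw [hfx, neg_neg]
      · obtain ⟨x, hx, hfx⟩ := key y hy'
        exact ⟨x, hx.ne', hfx⟩
    · -- multiplicative
      intro x y hx hy
      simp only
      rw [hgm x y hx hy]
      ring
end

section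
/- There exists a bijective additive function a : ℝ → ℝ such that the additive function λ ↦ a(λ) - λ/n is neither injective nor surjective (for a fixed integer n ≥ 2). Consequently, the multiplicative function g(μ) = μ^(-1/n)·exp(a(log μ)) on (0,∞) with λ ↦ g(λ)ⁿλ an automorphism of (0,∞) need not be a bijection of (0,∞). -/
/-!
Scale one vector `e` of a Hamel basis of `ℝ` over `ℚ` by `1/n` and fix the others. The resulting
`ℚ`-linear automorphism `a` agrees with `λ ↦ λ/n` at `e`, so `a - (·/n)` kills `e`; and the
`e`-coordinate of `a λ - λ/n` always vanishes, so `e` is not a value of it. On `(0,∞)` we have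
`g = exp ∘ (a - (·/n)) ∘ log` and `g(λ)ⁿλ = exp (n a(log λ))`, and `exp ∘ h ∘ log` is a
bijection of `(0,∞)` exactly when `h` is a bijection of `ℝ`.
-/

open Function Set Real

namespace Module.Basis

variable {ι R V : Type*} [DecidableEq ι] [CommRing R] [AddCommGroup V] [Module R V]
  (b : Basis ι R V) (i₀ : ι) (u : Rˣ)

noncomputable def scaleAt : V ≃ₗ[R] V :=
  b.equiv (b.unitsSMul (update 1 i₀ u)) (Equiv.refl ι)

theorem scaleAt_self : b.scaleAt i₀ u (b i₀) = u • b i₀ := by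
  simp [scaleAt, unitsSMul_apply]

theorem repr_scaleAt_self (x : V) : b.repr (b.scaleAt i₀ u x) i₀ = u * b.repr x i₀ := by
  have h : (b.unitsSMul (update 1 i₀ u)).repr (b.scaleAt i₀ u x) = b.repr x := by
    simp [scaleAt, Basis.equiv]
  rw [← h, repr_unitsSMul]
  simp [Units.smul_def]

variable [Nontrivial R]

theorem not_injective_scaleAt_sub_smul :
    ¬ Function.Injective (fun x => b.scaleAt i₀ u x - (u : R) • x) := fun hinj =>
  b.ne_zero i₀ <| hinj <| by simp [scaleAt_self, Units.smul_def]

theorem not_surjective_scaleAt_sub_smul :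
    ¬ Function.Surjective (fun x => b.scaleAt i₀ u x - (u : R) • x) := fun hsurj => by
  obtain ⟨x, hx⟩ := hsurj (b i₀)
  have := congrArg (fun v => b.repr v i₀) hx
  simp [repr_scaleAt_self] at this

end Module.Basis

theorem Real.bijOn_log : BijOn log (Ioi 0) univ :=
  ⟨mapsTo_univ _ _, log_injOn_pos, surjOn_log⟩

theorem Real.bijOn_exp : BijOn exp univ (Ioi 0) :=
  ⟨fun x _ => exp_pos x, exp_injective.injOn, fun y hy => ⟨log y, trivial, exp_log hy⟩⟩

theorem Real.bijOn_exp_comp_comp_log_iff {h : ℝ → ℝ} :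
    BijOn (fun x => exp (h (log x))) (Ioi 0) (Ioi 0) ↔ Bijective h := by
  refine ⟨fun H => bijOn_univ.1 ((bijOn_log.comp (H.comp bijOn_exp)).congr ?_),
    fun H => bijOn_exp.comp (H.bijOn_univ.comp bijOn_log)⟩
  intro x _
  simp [log_exp]

theorem Real.rpow_neg_one_div_mul_exp {μ : ℝ} (hμ : 0 < μ) (n y : ℝ) :
    μ ^ (-(1 : ℝ) / n) * exp y = exp (y - log μ / n) := by
  rw [rpow_def_of_pos hμ, ← exp_add]
  ring_nf

/-- There is a bijective additive function `a : ℝ → ℝ` such that `λ ↦ a(λ) - λ/n` is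
neither injective nor surjective; consequently the associated multiplicative function
`g(μ) = μ^(-1/n) exp (a (log μ))` on `(0,∞)`, for which `λ ↦ g(λ)ⁿ λ` is an
automorphism of `(0,∞)`, is not a bijection of `(0,∞)`. -/
theorem stmt_8 (n : ℕ) (hn : 2 ≤ n) :
    ∃ a : ℝ → ℝ, Function.Bijective a ∧ (∀ x y : ℝ, a (x + y) = a x + a y) ∧
      ¬ Function.Injective (fun lam : ℝ => a lam - lam / n) ∧
      ¬ Function.Surjective (fun lam : ℝ => a lam - lam / n) ∧
      (Set.BijOn (fun lam : ℝ =>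
          ((lam ^ (-(1 : ℝ) / n) * Real.exp (a (Real.log lam))) ^ n * lam))
          (Set.Ioi (0 : ℝ)) (Set.Ioi (0 : ℝ))) ∧
      ¬ Set.BijOn (fun μ : ℝ => μ ^ (-(1 : ℝ) / n) * Real.exp (a (Real.log μ)))
          (Set.Ioi (0 : ℝ)) (Set.Ioi (0 : ℝ)) := by
  classical
  have hn₀ : (n : ℝ) ≠ 0 := by positivity
  let b := Module.Basis.ofVectorSpace ℚ ℝ
  obtain ⟨i₀⟩ := b.index_nonempty
  let u : ℚˣ := Units.mk0 (n : ℚ)⁻¹ (by positivity)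
  let a := b.scaleAt i₀ u
  have hdiv : ∀ x : ℝ, x / n = (u : ℚ) • x := fun x => by
    simp [u, Rat.smul_def, div_eq_inv_mul]
  have hg : EqOn (fun μ : ℝ => μ ^ (-(1 : ℝ) / n) * exp (a (log μ)))
      (fun μ => exp (a (log μ) - log μ / n)) (Ioi 0) := fun μ hμ =>
    rpow_neg_one_div_mul_exp hμ _ _
  have hgn : EqOn (fun lam : ℝ => (lam ^ (-(1 : ℝ) / n) * exp (a (log lam))) ^ n * lam)
      (fun lam => exp (n * a (log lam))) (Ioi 0) := fun lam hlam => by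
    dsimp only
    rw [rpow_neg_one_div_mul_exp hlam, ← exp_nat_mul, ← exp_log hlam, ← exp_add, log_exp]
    congr 1
    field_simp
    ring
  refine ⟨a, a.bijective, map_add a, ?_, ?_, ?_, ?_⟩
  · simpa only [hdiv] using b.not_injective_scaleAt_sub_smul i₀ u
  · simpa only [hdiv] using b.not_surjective_scaleAt_sub_smul i₀ u
  · exact hgn.symm.bijOn_iff.1 <| bijOn_exp_comp_comp_log_iff.2 <|
      (mulLeft_bijective₀ _ hn₀).comp a.bijective
  · rw [hg.bijOn_iff, bijOn_exp_comp_comp_log_iff (h := fun x => a x - x / n)]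
    simpa only [hdiv] using b.not_injective_scaleAt_sub_smul i₀ u ∘ Function.Bijective.injective
end

section
/- Let φ : ℝ → ℝ be a map such that for every pair a, b ∈ ℝ there is an additive bijection ψ of ℝ with φ(a) = ψ(a) and φ(b) = ψ(b) (a local automorphism of the additive group ℝ). Then φ(0) = 0, and for any a, b that are linearly dependent over ℚ with a = λb (λ ∈ ℚ), one has φ(a) = λφ(b); moreover if a, b are linearly independent over ℚ then φ(a), φ(b) are linearly independent over ℚ. -/
lemma psi_rat_smul (ψ : ℝ → ℝ) (hadd : ∀ x y : ℝ, ψ (x + y) = ψ x + ψ y)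
    (q : ℚ) (x : ℝ) : ψ ((q : ℝ) * x) = (q : ℝ) * ψ x := by
  let f : ℝ →+ ℝ := AddMonoidHom.mk' ψ hadd
  have := map_rat_smul f q x
  simpa [f, Rat.smul_def] using this

/-- Properties of local automorphisms of the additive group `ℝ`: they vanish at `0`, are
`ℚ`-homogeneous, and preserve `ℚ`-linear independence of pairs. -/
theorem stmt_9 (φ : ℝ → ℝ)
    (hloc : ∀ a b : ℝ, ∃ ψ : ℝ → ℝ, Function.Bijective ψ ∧
      (∀ x y : ℝ, ψ (x + y) = ψ x + ψ y) ∧ φ a = ψ a ∧ φ b = ψ b) :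
    φ 0 = 0 ∧
    (∀ (lam : ℚ) (b : ℝ), φ ((lam : ℝ) * b) = (lam : ℝ) * φ b) ∧
    (∀ a b : ℝ, LinearIndependent ℚ ![a, b] → LinearIndependent ℚ ![φ a, φ b]) := by
  refine ⟨?_, ?_, ?_⟩
  · obtain ⟨ψ, _, hadd, h0, _⟩ := hloc 0 0
    have : ψ 0 = 0 := by
      have h := hadd 0 0; rw [add_zero] at h; linarith
    rw [h0, this]
  · intro lam b
    obtain ⟨ψ, _, hadd, ha, hb⟩ := hloc ((lam : ℝ) * b) b
    rw [ha, hb, psi_rat_smul ψ hadd]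
  · intro a b hli
    obtain ⟨ψ, hbij, hadd, ha, hb⟩ := hloc a b
    have hψ0 : ψ 0 = 0 := by have h := hadd 0 0; rw [add_zero] at h; linarith
    rw [LinearIndependent.pair_iff] at hli ⊢
    intro s t hst
    apply hli s t
    apply hbij.injective
    rw [ha, hb] at hst
    rw [hψ0]
    calc ψ (s • a + t • b) = (s:ℝ) * ψ a + (t:ℝ) * ψ b := by
          rw [hadd]
          simp only [Rat.smul_def]
          rw [psi_rat_smul ψ hadd, psi_rat_smul ψ hadd]
      _ = 0 := by simpa [Rat.smul_def] using hst
end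

section
/- Let n ≥ 2. Every unitary n×n complex matrix A with det A = 1 is a product of an even number of simple symmetries, where a simple symmetry is a unitary matrix of the form I - 2P with P a rank-one orthogonal projection. Consequently, any group homomorphism χ : Uₙ(ℂ) → S¹ that takes the same value on all simple symmetries and values in {1, -1} on them satisfies χ(A) = 1 for all A ∈ SUₙ(ℂ). -/
/-!
The Householder reflection `H u = 1 - 2 u u* / (u* u)` is a simple symmetry of determinant `-1`.
If `x ≠ y` have the same length and `⟪x, y⟫` is real, then `H (x - y)` sends `x` to `y` and fixes
every vector orthogonal to both. Composing such reflections clears the columns of a unitary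
matrix one at a time, until only `diag (1, …, 1, λ)` is left; when the determinant is `±1`, so
is `λ`, and the remainder is `1` or the reflection in the last basis vector. Hence every unitary
matrix of determinant `1` is a product of reflections, and as each has determinant `-1` their
number is even. A character equal to `ε = ±1` on all simple symmetries thus takes the value
`ε ^ (2m) = 1` on `SUₙ`.
-/

/-- `S` is a simple symmetry: a unitary matrix of the form `I - 2P` with `P` a rank-one
orthogonal (Hermitian idempotent) projection. -/
def IsSimpleSymmetry {n : ℕ} (S : Matrix.unitaryGroup (Fin n) ℂ) : Prop :=
  ∃ P : Matrix (Fin n) (Fin n) ℂ,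
    P.IsHermitian ∧ P * P = P ∧ P.rank = 1 ∧
      (S : Matrix (Fin n) (Fin n) ℂ) = 1 - 2 • P

open Matrix

open scoped ComplexOrder in
lemma dotProduct_star_self_ne_zero {ι 𝕜 : Type*} [RCLike 𝕜] [Fintype ι] {u : ι → 𝕜}
    (hu : u ≠ 0) : star u ⬝ᵥ u ≠ 0 :=
  dotProduct_star_self_eq_zero.not.mpr hu

lemma RCLike.exists_star_mul_self_eq_one_isSelfAdjoint_mul {𝕜 : Type*} [RCLike 𝕜] (a : 𝕜) :
    ∃ μ : 𝕜, star μ * μ = 1 ∧ IsSelfAdjoint (a * μ) := by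
  rcases eq_or_ne a 0 with rfl | ha
  · exact ⟨1, by simp, by simp⟩
  have hnorm : (‖a‖ : 𝕜) ≠ 0 := RCLike.ofReal_ne_zero.mpr (norm_ne_zero_iff.mpr ha)
  have hconj : a * starRingEnd 𝕜 a = (‖a‖ : 𝕜) ^ 2 := RCLike.mul_conj a
  refine ⟨starRingEnd 𝕜 a / ‖a‖, ?_, ?_⟩
  · rw [RCLike.star_def, map_div₀, RCLike.conj_conj, RCLike.conj_ofReal, div_mul_div_comm, hconj,
      sq, div_self (mul_ne_zero hnorm hnorm)]
  · rw [mul_div_assoc', hconj, sq, mul_div_cancel_right₀ _ hnorm]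
    exact RCLike.conj_ofReal _

namespace Matrix

variable {ι 𝕜 : Type*} [RCLike 𝕜] [Fintype ι]

noncomputable def lineProj (u : ι → 𝕜) : Matrix ι ι 𝕜 :=
  (star u ⬝ᵥ u)⁻¹ • vecMulVec u (star u)

lemma lineProj_mulVec (u v : ι → 𝕜) :
    lineProj u *ᵥ v = ((star u ⬝ᵥ v) / (star u ⬝ᵥ u)) • u := by
  ext i
  simp [lineProj, smul_mulVec, vecMulVec_mulVec, div_eq_inv_mul, mul_comm, mul_assoc]

lemma isHermitian_lineProj (u : ι → 𝕜) : (lineProj u).IsHermitian := by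
  rw [IsHermitian, lineProj, conjTranspose_smul, conjTranspose_vecMulVec, star_star,
    star_inv₀, ← star_dotProduct]

lemma lineProj_mulVec_self {u : ι → 𝕜} (hu : u ≠ 0) : lineProj u *ᵥ u = u := by
  rw [lineProj_mulVec, div_self (dotProduct_star_self_ne_zero hu), one_smul]

lemma lineProj_mul_self {u : ι → 𝕜} (hu : u ≠ 0) : lineProj u * lineProj u = lineProj u := by
  refine ext_iff_mulVec.mpr fun v => ?_
  rw [← mulVec_mulVec, lineProj_mulVec u v, mulVec_smul, lineProj_mulVec_self hu]

lemma rank_lineProj {u : ι → 𝕜} (hu : u ≠ 0) : (lineProj u).rank = 1 := by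
  refine le_antisymm ?_ (Submodule.one_le_finrank_iff.mpr ?_)
  · rw [lineProj, ← smul_vecMulVec]
    exact rank_vecMulVec_le _ _
  · exact (Submodule.ne_bot_iff _).mpr ⟨u, ⟨u, lineProj_mulVec_self hu⟩, hu⟩

variable [DecidableEq ι]

noncomputable def householder (u : ι → 𝕜) : Matrix ι ι 𝕜 :=
  1 - 2 • lineProj u

lemma householder_mulVec (u v : ι → 𝕜) :
    householder u *ᵥ v = v - (2 * (star u ⬝ᵥ v) / (star u ⬝ᵥ u)) • u := by
  rw [householder, sub_mulVec, one_mulVec, smul_mulVec, lineProj_mulVec,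
    ← Nat.cast_smul_eq_nsmul 𝕜, smul_smul, mul_div_assoc, Nat.cast_ofNat]

lemma householder_mulVec_of_dotProduct_eq_zero {u v : ι → 𝕜} (h : star u ⬝ᵥ v = 0) :
    householder u *ᵥ v = v := by
  rw [householder_mulVec, h, mul_zero, zero_div, zero_smul, sub_zero]

lemma isHermitian_householder (u : ι → 𝕜) : (householder u).IsHermitian := by
  rw [IsHermitian, householder, conjTranspose_sub, conjTranspose_one, conjTranspose_nsmul,
    isHermitian_lineProj u]

lemma householder_mul_self {u : ι → 𝕜} (hu : u ≠ 0) : householder u * householder u = 1 := by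
  have hP := lineProj_mul_self hu
  simp only [householder, sub_mul, mul_sub, one_mul, mul_one, smul_mul_smul_comm, hP]
  rw [← Nat.cast_smul_eq_nsmul 𝕜]
  module

lemma householder_mem_unitaryGroup {u : ι → 𝕜} (hu : u ≠ 0) :
    householder u ∈ unitaryGroup ι 𝕜 := by
  rw [mem_unitaryGroup_iff, star_eq_conjTranspose, isHermitian_householder u,
    householder_mul_self hu]

lemma det_householder {u : ι → 𝕜} (hu : u ≠ 0) : (householder u).det = -1 := by
  have h : householder u =
      1 + replicateCol Unit ((-2 / (star u ⬝ᵥ u)) • u) * replicateRow Unit (star u) := by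
    rw [← vecMulVec_eq, smul_vecMulVec, householder, lineProj, ← Nat.cast_smul_eq_nsmul 𝕜]
    module
  rw [h, det_one_add_replicateCol_mul_replicateRow, dotProduct_smul, smul_eq_mul,
    div_mul_cancel₀ _ (dotProduct_star_self_ne_zero hu)]
  norm_num

lemma householder_sub_mulVec {x y : ι → 𝕜} (hne : x ≠ y)
    (hnorm : star x ⬝ᵥ x = star y ⬝ᵥ y) (hreal : IsSelfAdjoint (star x ⬝ᵥ y)) :
    householder (x - y) *ᵥ x = y := by
  have hyx : star y ⬝ᵥ x = star x ⬝ᵥ y := by rw [star_dotProduct, hreal.star_eq]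
  have hden : star (x - y) ⬝ᵥ (x - y) = 2 * (star (x - y) ⬝ᵥ x) := by
    simp only [star_sub, sub_dotProduct, dotProduct_sub, hnorm, hyx]
    ring
  rw [householder_mulVec, ← hden, div_self (dotProduct_star_self_ne_zero (sub_ne_zero.mpr hne)),
    one_smul, sub_sub_cancel]

lemma star_mulVec_dotProduct_mulVec {U : Matrix ι ι 𝕜} (hU : U ∈ unitaryGroup ι 𝕜)
    (v w : ι → 𝕜) : star (U *ᵥ v) ⬝ᵥ (U *ᵥ w) = star v ⬝ᵥ w := by
  rw [star_mulVec, dotProduct_mulVec, vecMul_vecMul, ← star_eq_conjTranspose,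
    mem_unitaryGroup_iff'.mp hU, vecMul_one]

variable (ι 𝕜) in
def householderReflections : Set (unitaryGroup ι 𝕜) :=
  {S | ∃ u ≠ 0, (S : Matrix ι ι 𝕜) = householder u}

lemma inv_eq_self_of_mem_householderReflections {S : unitaryGroup ι 𝕜}
    (hS : S ∈ householderReflections ι 𝕜) : S⁻¹ = S := by
  obtain ⟨u, hu, hSu⟩ := hS
  refine inv_eq_of_mul_eq_one_right (Subtype.ext ?_)
  rw [UnitaryGroup.mul_val, hSu, householder_mul_self hu]
  rfl

lemma exists_list_of_mem_closure_householderReflections {g : unitaryGroup ι 𝕜}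
    (hg : g ∈ Subgroup.closure (householderReflections ι 𝕜)) :
    ∃ L : List (unitaryGroup ι 𝕜), (∀ S ∈ L, S ∈ householderReflections ι 𝕜) ∧ L.prod = g := by
  rw [← Subgroup.mem_toSubmonoid, Subgroup.closure_toSubmonoid] at hg
  obtain ⟨L, hL, rfl⟩ := Submonoid.exists_list_of_mem_closure hg
  refine ⟨L, fun S hS => ?_, rfl⟩
  rcases hL S hS with h | h
  · exact h
  · have hS' := Set.mem_inv.mp h
    rwa [← inv_inv S, inv_eq_self_of_mem_householderReflections hS']

lemma det_list_prod_householderReflections {L : List (unitaryGroup ι 𝕜)}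
    (hL : ∀ S ∈ L, S ∈ householderReflections ι 𝕜) :
    (L.prod : Matrix ι ι 𝕜).det = (-1) ^ L.length := by
  induction L with
  | nil => simp
  | cons S L ih =>
    obtain ⟨u, hu, hSu⟩ := hL S List.mem_cons_self
    rw [List.prod_cons, UnitaryGroup.mul_val, det_mul, hSu, det_householder hu,
      ih fun T hT => hL T (List.mem_cons_of_mem S hT), List.length_cons, pow_succ']

lemma det_sq_of_mem_closure_householderReflections {g : unitaryGroup ι 𝕜}
    (hg : g ∈ Subgroup.closure (householderReflections ι 𝕜)) :
    (g : Matrix ι ι 𝕜).det ^ 2 = 1 := by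
  obtain ⟨L, hL, rfl⟩ := exists_list_of_mem_closure_householderReflections hg
  rw [det_list_prod_householderReflections hL, ← pow_mul, pow_mul', neg_one_sq, one_pow]

lemma exists_mem_closure_householderReflections_mulVec_eq {x y : ι → 𝕜}
    (hnorm : star x ⬝ᵥ x = star y ⬝ᵥ y) (hreal : IsSelfAdjoint (star x ⬝ᵥ y)) :
    ∃ g ∈ Subgroup.closure (householderReflections ι 𝕜), (g : Matrix ι ι 𝕜) *ᵥ x = y ∧
      ∀ v, star x ⬝ᵥ v = 0 → star y ⬝ᵥ v = 0 → (g : Matrix ι ι 𝕜) *ᵥ v = v := by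
  rcases eq_or_ne x y with rfl | hne
  · exact ⟨1, one_mem _, one_mulVec x, fun v _ _ => one_mulVec v⟩
  have hu : x - y ≠ 0 := sub_ne_zero.mpr hne
  refine ⟨⟨householder (x - y), householder_mem_unitaryGroup hu⟩,
    Subgroup.subset_closure ⟨x - y, hu, rfl⟩, householder_sub_mulVec hne hnorm hreal,
    fun v hxv hyv => householder_mulVec_of_dotProduct_eq_zero ?_⟩
  rw [star_sub, sub_dotProduct, hxv, hyv, sub_zero]

def FixesFirst {n : ℕ} (k : ℕ) (B : Matrix (Fin n) (Fin n) 𝕜) : Prop :=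
  ∀ i : Fin n, (i : ℕ) < k → B *ᵥ Pi.single i 1 = Pi.single i 1

lemma star_single_dotProduct_single {i j : ι} (h : i ≠ j) (a b : 𝕜) :
    star (Pi.single i a) ⬝ᵥ Pi.single j b = 0 := by
  rw [dotProduct_single, Pi.star_apply, Pi.single_eq_of_ne h.symm, star_zero, zero_mul]

/-- The phase `μ` makes the inner products of `z = Pi.single (k + 1) μ` with both `B eₖ` and `eₖ`
real, so two Householder reflections carry `B eₖ` to `z` to `eₖ`, both fixing `e₀, …, eₖ₋₁`. -/
lemma exists_mem_closure_householderReflections_fixesFirst_succ {n k : ℕ} (hk : k + 2 ≤ n)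
    {B : unitaryGroup (Fin n) 𝕜} (hB : FixesFirst k (B : Matrix (Fin n) (Fin n) 𝕜)) :
    ∃ g ∈ Subgroup.closure (householderReflections (Fin n) 𝕜),
      FixesFirst (k + 1) ((g * B : unitaryGroup (Fin n) 𝕜) : Matrix (Fin n) (Fin n) 𝕜) := by
  set k₀ : Fin n := ⟨k, by omega⟩
  set k₁ : Fin n := ⟨k + 1, by omega⟩
  set x := (B : Matrix (Fin n) (Fin n) 𝕜) *ᵥ Pi.single k₀ 1
  obtain ⟨μ, hμ, hμx⟩ := RCLike.exists_star_mul_self_eq_one_isSelfAdjoint_mul (star (x k₁))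
  set z : Fin n → 𝕜 := Pi.single k₁ μ
  have hx_unit : star x ⬝ᵥ x = 1 := by
    rw [star_mulVec_dotProduct_mulVec B.2]
    simp
  have hz_unit : star z ⬝ᵥ z = 1 := by
    simpa [z] using hμ
  have hx_orth : ∀ i : Fin n, (i : ℕ) < k → star x ⬝ᵥ Pi.single i 1 = 0 := fun i hi => by
    rw [← hB i hi, star_mulVec_dotProduct_mulVec B.2]
    exact star_single_dotProduct_single (Fin.ne_of_gt hi) _ _
  obtain ⟨g₁, hg₁, hg₁x, hg₁fix⟩ := exists_mem_closure_householderReflections_mulVec_eq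
    (x := x) (y := z) (hx_unit.trans hz_unit.symm)
    (by rwa [dotProduct_single, Pi.star_apply])
  obtain ⟨g₂, hg₂, hg₂z, hg₂fix⟩ := exists_mem_closure_householderReflections_mulVec_eq
    (x := z) (y := Pi.single k₀ 1) (by rw [hz_unit]; simp)
    (by rw [star_single_dotProduct_single (Fin.ne_of_gt (Nat.lt_succ_self k))]; exact .zero _)
  refine ⟨g₂ * g₁, mul_mem hg₂ hg₁, fun i hi => ?_⟩
  simp only [UnitaryGroup.mul_val, ← mulVec_mulVec]
  rcases Nat.lt_succ_iff_lt_or_eq.mp hi with hi | hi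
  · have hk₁i : k₁ ≠ i := Fin.ne_of_gt (Fin.lt_def.mpr (by omega))
    have hk₀i : k₀ ≠ i := Fin.ne_of_gt hi
    rw [hB i hi, hg₁fix _ (hx_orth i hi) (star_single_dotProduct_single hk₁i _ _),
      hg₂fix _ (star_single_dotProduct_single hk₁i _ _) (star_single_dotProduct_single hk₀i _ _)]
  · have : i = k₀ := Fin.ext hi
    subst this
    rw [hg₁x, hg₂z]

lemma exists_mem_closure_householderReflections_fixesFirst {n k : ℕ} (hk : k + 1 ≤ n)
    (A : unitaryGroup (Fin n) 𝕜) :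
    ∃ g ∈ Subgroup.closure (householderReflections (Fin n) 𝕜),
      FixesFirst k ((g * A : unitaryGroup (Fin n) 𝕜) : Matrix (Fin n) (Fin n) 𝕜) := by
  induction k with
  | zero => exact ⟨1, one_mem _, fun i hi => absurd hi (Nat.not_lt_zero _)⟩
  | succ k ih =>
    obtain ⟨g, hg, hgA⟩ := ih (by omega)
    obtain ⟨h, hh, hhgA⟩ := exists_mem_closure_householderReflections_fixesFirst_succ hk hgA
    exact ⟨h * g, mul_mem hh hg, by rwa [mul_assoc]⟩

lemma eq_diagonal_update_of_mulVec_single {B : Matrix ι ι 𝕜} (hB : B ∈ unitaryGroup ι 𝕜)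
    {j : ι} (hfix : ∀ i ≠ j, B *ᵥ Pi.single i 1 = Pi.single i 1) :
    B = diagonal (Function.update 1 j (B j j)) := by
  ext i l
  rcases eq_or_ne l j with rfl | hl
  · rcases eq_or_ne i l with rfl | hi
    · simp
    · have h := star_mulVec_dotProduct_mulVec hB (Pi.single i 1) (Pi.single l 1)
      rw [hfix i hi, star_single_dotProduct_single hi] at h
      simpa [mulVec_single_one, diagonal_apply_ne _ hi] using h
  · have h := congrFun (hfix l hl) i
    rw [mulVec_single_one, col_apply] at h
    rw [h, diagonal_apply, Pi.single_apply]
    split_ifs with hil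
    · rw [hil, Function.update_of_ne hl, Pi.one_apply]
    · rfl

lemma householder_single_one (j : ι) :
    householder (Pi.single j (1 : 𝕜)) = diagonal (Function.update 1 j (-1)) := by
  refine ext_of_mulVec_single fun i => ?_
  rw [diagonal_mulVec_single, mul_one]
  rcases eq_or_ne i j with rfl | hij
  · ext l
    rw [householder_mulVec, Function.update_self]
    by_cases h : l = i <;> norm_num [h]
  · rw [householder_mulVec_of_dotProduct_eq_zero (star_single_dotProduct_single hij.symm _ _),
      Function.update_of_ne hij, Pi.one_apply]

lemma mem_closure_householderReflections_of_mulVec_single {B : unitaryGroup ι 𝕜} {j : ι}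
    (hfix : ∀ i ≠ j, (B : Matrix ι ι 𝕜) *ᵥ Pi.single i 1 = Pi.single i 1)
    (hdet : (B : Matrix ι ι 𝕜).det ^ 2 = 1) :
    B ∈ Subgroup.closure (householderReflections ι 𝕜) := by
  have hB := eq_diagonal_update_of_mulVec_single B.2 hfix
  have hdetB : (B : Matrix ι ι 𝕜).det = (B : Matrix ι ι 𝕜) j j := by
    rw [hB, det_diagonal, Finset.prod_update_of_mem (Finset.mem_univ j)]
    simp
  rw [hdetB, sq, mul_self_eq_one_iff] at hdet
  rcases hdet with h | h
  · rw [h, Function.update_eq_self_iff.mpr (Pi.one_apply j).symm] at hB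
    exact (Subtype.ext (hB.trans diagonal_one) : B = 1) ▸ one_mem _
  · rw [h, ← householder_single_one] at hB
    exact Subgroup.subset_closure ⟨Pi.single j 1, by simp, hB⟩

theorem mem_closure_householderReflections_of_det_sq {n : ℕ} {A : unitaryGroup (Fin n) 𝕜}
    (hA : (A : Matrix (Fin n) (Fin n) 𝕜).det ^ 2 = 1) :
    A ∈ Subgroup.closure (householderReflections (Fin n) 𝕜) := by
  rcases n with _ | n
  · exact Subsingleton.elim 1 A ▸ one_mem _
  obtain ⟨g, hg, hgA⟩ := exists_mem_closure_householderReflections_fixesFirst le_rfl A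
  have hgA' : g * A ∈ Subgroup.closure (householderReflections (Fin (n + 1)) 𝕜) :=
    mem_closure_householderReflections_of_mulVec_single (j := Fin.last n)
      (fun i hi => hgA i (Fin.val_lt_last hi))
      (by rw [UnitaryGroup.mul_val, det_mul, mul_pow,
        det_sq_of_mem_closure_householderReflections hg, hA, one_mul])
  simpa using mul_mem (inv_mem hg) hgA'

lemma exists_even_length_list_householderReflections {n : ℕ} {A : unitaryGroup (Fin n) 𝕜}
    (hA : (A : Matrix (Fin n) (Fin n) 𝕜).det = 1) :
    ∃ L : List (unitaryGroup (Fin n) 𝕜), Even L.length ∧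
      (∀ S ∈ L, S ∈ householderReflections (Fin n) 𝕜) ∧ L.prod = A := by
  obtain ⟨L, hL, rfl⟩ := exists_list_of_mem_closure_householderReflections
    (mem_closure_householderReflections_of_det_sq (by rw [hA, one_pow]))
  refine ⟨L, (neg_one_pow_eq_one_iff_even (R := 𝕜) (by norm_num)).mp ?_, hL, rfl⟩
  rw [← det_list_prod_householderReflections hL, hA]

end Matrix

lemma isSimpleSymmetry_of_mem_householderReflections {n : ℕ} {S : unitaryGroup (Fin n) ℂ}
    (hS : S ∈ householderReflections (Fin n) ℂ) : IsSimpleSymmetry S :=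
  let ⟨u, hu, hSu⟩ := hS
  ⟨lineProj u, isHermitian_lineProj u, lineProj_mul_self hu, rank_lineProj hu, hSu⟩

theorem stmt_12_general (n : ℕ) :
    (∀ A : Matrix.unitaryGroup (Fin n) ℂ, (A : Matrix (Fin n) (Fin n) ℂ).det = 1 →
      ∃ (m : ℕ) (L : List (Matrix.unitaryGroup (Fin n) ℂ)),
        L.length = 2 * m ∧ (∀ S ∈ L, IsSimpleSymmetry S) ∧ L.prod = A) ∧
    (∀ χ : Matrix.unitaryGroup (Fin n) ℂ →* Circle, ∀ ε : Circle,
      (ε = 1 ∨ (ε : ℂ) = -1) →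
      (∀ S : Matrix.unitaryGroup (Fin n) ℂ, IsSimpleSymmetry S → χ S = ε) →
      ∀ A : Matrix.unitaryGroup (Fin n) ℂ,
        (A : Matrix (Fin n) (Fin n) ℂ).det = 1 → χ A = 1) := by
  have hprod : ∀ A : unitaryGroup (Fin n) ℂ, (A : Matrix (Fin n) (Fin n) ℂ).det = 1 →
      ∃ (m : ℕ) (L : List (unitaryGroup (Fin n) ℂ)),
        L.length = 2 * m ∧ (∀ S ∈ L, IsSimpleSymmetry S) ∧ L.prod = A := by
    intro A hA
    obtain ⟨L, ⟨m, hm⟩, hL, rfl⟩ := exists_even_length_list_householderReflections hA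
    exact ⟨m, L, by omega,
      fun S hS => isSimpleSymmetry_of_mem_householderReflections (hL S hS), rfl⟩
  refine ⟨hprod, fun χ ε hε hχ A hA => ?_⟩
  obtain ⟨m, L, hlen, hL, rfl⟩ := hprod A hA
  have hε2 : ε ^ 2 = 1 := by
    rcases hε with rfl | h
    · exact one_pow 2
    · ext
      simp [h]
  have hχL : ∀ x ∈ L.map χ, x = ε := List.forall_mem_map.mpr fun S hS => hχ S (hL S hS)
  rw [map_list_prod, List.prod_eq_pow_card _ ε hχL, List.length_map, hlen, pow_mul, hε2, one_pow]

/-- Every unitary matrix of determinant one is a product of an even number of simple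
symmetries; consequently, any homomorphism `χ : Uₙ(ℂ) → S¹` taking a common value
`ε ∈ {1, -1}` on all simple symmetries is trivial on `SUₙ(ℂ)`. -/
theorem stmt_12 (n : ℕ) (hn : 2 ≤ n) :
    (∀ A : Matrix.unitaryGroup (Fin n) ℂ, (A : Matrix (Fin n) (Fin n) ℂ).det = 1 →
      ∃ (m : ℕ) (L : List (Matrix.unitaryGroup (Fin n) ℂ)),
        L.length = 2 * m ∧ (∀ S ∈ L, IsSimpleSymmetry S) ∧ L.prod = A) ∧
    (∀ χ : Matrix.unitaryGroup (Fin n) ℂ →* Circle, ∀ ε : Circle,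
      (ε = 1 ∨ (ε : ℂ) = -1) →
      (∀ S : Matrix.unitaryGroup (Fin n) ℂ, IsSimpleSymmetry S → χ S = ε) →
      ∀ A : Matrix.unitaryGroup (Fin n) ℂ,
        (A : Matrix (Fin n) (Fin n) ℂ).det = 1 → χ A = 1) :=
  stmt_12_general n
end

section
/- Define ℬ to be the following set of n² real n×n matrices (n ≥ 3): the n diagonal matrices with entry (1/2)^{n-1} in one diagonal position and 2 in the remaining n-1 diagonal positions, together with the n²-n matrices having (1/2)^{n-1} in the upper left corner, 2 in the other diagonal positions, 1 in exactly one off-diagonal position, and 0 elsewhere. Then every element of ℬ has determinant 1, and ℬ is a basis of the vector space Mₙ(ℝ) of all n×n real matrices. -/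
/-!
The diagonal members of `ℬ` are `2 • 1 + (a - 2) • Eᵢᵢ` with `a = (1/2)^(n-1)`, so their sum is a
nonzero multiple of `1` and each `Eᵢᵢ` lies in their span. Every off-diagonal member differs from
`ℬ(0,0)` by exactly one `Eᵢⱼ`. Hence `ℬ` spans `Mₙ(ℝ)`, and having `n²` elements it is a basis.
Each member is diagonal or triangular with diagonal product `a · 2^(n-1) = 1`.
-/

/-- The family `ℬ` of `n²` matrices, indexed by pairs `(i, j)`: for `i = j` the diagonal
matrix with `(1/2)^(n-1)` in position `i` and `2` in the remaining diagonal positions;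
for `i ≠ j` the matrix with `(1/2)^(n-1)` in the upper left corner, `2` in the other
diagonal positions, `1` in position `(i, j)` and `0` elsewhere. -/
noncomputable def Bmat (n : ℕ) [NeZero n] (p : Fin n × Fin n) : Matrix (Fin n) (Fin n) ℝ :=
  if p.1 = p.2 then
    Matrix.diagonal (fun k => if k = p.1 then ((1 : ℝ) / 2) ^ (n - 1) else 2)
  else
    Matrix.diagonal (fun k => if k = 0 then ((1 : ℝ) / 2) ^ (n - 1) else 2) +
      Matrix.single p.1 p.2 1

open Matrix

theorem Fintype.prod_ite_eq_mul_pow {m R : Type*} [Fintype m] [DecidableEq m] [CommMonoid R]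
    (i : m) (a b : R) :
    ∏ k, (if k = i then a else b) = a * b ^ (Fintype.card m - 1) := by
  rw [Fintype.prod_eq_mul_prod_compl i, if_pos rfl,
    Finset.prod_congr rfl fun k hk => if_neg (Finset.mem_compl.1 hk ∘ Finset.mem_singleton.2),
    Finset.prod_const, Finset.card_compl, Finset.card_singleton]

namespace Matrix

variable {m R : Type*} [DecidableEq m]

theorem diagonal_ite_eq [Ring R] (i : m) (a b : R) :
    diagonal (fun k => if k = i then a else b) = b • 1 + (a - b) • single i i 1 := by
  ext k l
  by_cases hkl : k = l
  · subst hkl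
    by_cases hki : k = i
    · simp [hki]
    · simp [hki, single_apply_of_ne, Ne.symm hki]
  · simp [hkl, single_apply_of_ne _ _ _ _ _ fun h : i = k ∧ i = l => hkl (h.1.symm.trans h.2)]

variable [Fintype m]

theorem det_diagonal_add_single_of_ne [LinearOrder m] [CommRing R] (d : m → R) {i j : m}
    (hij : i ≠ j) (c : R) : (diagonal d + single i j c).det = ∏ k, d k := by
  have hdiag : ∀ k, (diagonal d + single i j c) k k = d k := fun k => by
    simp [single_apply_of_ne _ _ c _ _ fun h : i = k ∧ j = k => hij (h.1.trans h.2.symm)]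
  rcases hij.lt_or_gt with h | h
  · rw [det_of_isUpperTriangular ((blockTriangular_diagonal d).add (blockTriangular_single h.le c))]
    simp_rw [hdiag]
  · rw [det_of_isLowerTriangular _
      ((blockTriangular_diagonal d).add (blockTriangular_single' (b := id) h.le c))]
    simp_rw [hdiag]

theorem sum_diagonal_ite_eq [CommRing R] (a b : R) :
    ∑ i : m, diagonal (fun k => if k = i then a else b) = (a - b + Fintype.card m * b) • 1 := by
  simp_rw [diagonal_ite_eq, Finset.sum_add_distrib, ← Finset.smul_sum, sum_single_one,
    Finset.sum_const, Finset.card_univ, ← Nat.cast_smul_eq_nsmul R, smul_smul, ← add_smul]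
  ring_nf

variable {K : Type*} [Field K]

theorem single_mem_span_diagonal_ite {a b : K} (hab : a ≠ b)
    (hsum : a - b + Fintype.card m * b ≠ 0) (i : m) :
    single i i 1 ∈
      Submodule.span K (Set.range fun i : m => diagonal (fun k => if k = i then a else b)) := by
  set D := fun i : m => diagonal (fun k => if k = i then a else b)
  have hD : ∀ i, D i ∈ Submodule.span K (Set.range D) := fun i => Submodule.subset_span ⟨i, rfl⟩
  have hone : (1 : Matrix m m K) ∈ Submodule.span K (Set.range D) := by
    rw [← inv_smul_smul₀ hsum 1, ← sum_diagonal_ite_eq]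
    exact Submodule.smul_mem _ _ (Submodule.sum_mem _ fun i _ => hD i)
  rw [← inv_smul_smul₀ (sub_ne_zero.2 hab) (single i i 1),
    eq_sub_of_add_eq' (diagonal_ite_eq i a b).symm]
  exact Submodule.smul_mem _ _ (sub_mem (hD i) (Submodule.smul_mem _ _ hone))

theorem eq_top_of_forall_single_mem {p : Submodule K (Matrix m m K)}
    (h : ∀ i j, single i j 1 ∈ p) : p = ⊤ := by
  rw [eq_top_iff, ← (stdBasis K m m).span_eq, Submodule.span_le]
  rintro _ ⟨⟨i, j⟩, rfl⟩
  rw [stdBasis_eq_single]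
  exact h i j

end Matrix

section Bmat

variable (n : ℕ)

theorem prod_half_pow_ite_two (i : Fin n) :
    ∏ k : Fin n, (if k = i then ((1 : ℝ) / 2) ^ (n - 1) else 2) = 1 := by
  rw [Fintype.prod_ite_eq_mul_pow, Fintype.card_fin, ← mul_pow]
  norm_num

variable [NeZero n]

theorem Bmat_self (i : Fin n) :
    Bmat n (i, i) = diagonal (fun k => if k = i then ((1 : ℝ) / 2) ^ (n - 1) else 2) :=
  if_pos rfl

theorem Bmat_of_ne {i j : Fin n} (hij : i ≠ j) :
    Bmat n (i, j) = Bmat n (0, 0) + single i j 1 := by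
  simp [Bmat, hij]

theorem det_Bmat (p : Fin n × Fin n) : (Bmat n p).det = 1 := by
  obtain ⟨i, j⟩ := p
  rcases eq_or_ne i j with rfl | hij
  · rw [Bmat_self, det_diagonal, prod_half_pow_ite_two]
  · rw [Bmat_of_ne n hij, Bmat_self, det_diagonal_add_single_of_ne _ hij, prod_half_pow_ite_two]

theorem span_range_Bmat : Submodule.span ℝ (Set.range (Bmat n)) = ⊤ := by
  have hmem : ∀ p, Bmat n p ∈ Submodule.span ℝ (Set.range (Bmat n)) :=
    fun p => Submodule.subset_span ⟨p, rfl⟩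
  have hne : ((1 : ℝ) / 2) ^ (n - 1) ≠ 2 :=
    ((pow_le_one₀ (by norm_num) (by norm_num)).trans_lt one_lt_two).ne
  have hsum : ((1 : ℝ) / 2) ^ (n - 1) - 2 + Fintype.card (Fin n) * 2 ≠ 0 := by
    have : (1 : ℝ) ≤ n := Nat.one_le_cast.2 NeZero.one_le
    have hpos : (0 : ℝ) < (1 / 2) ^ (n - 1) := by positivity
    rw [Fintype.card_fin]
    apply ne_of_gt
    linarith
  refine eq_top_of_forall_single_mem fun i j => ?_
  rcases eq_or_ne i j with rfl | hij
  · refine Submodule.span_mono ?_ (single_mem_span_diagonal_ite hne hsum i)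
    rintro _ ⟨k, rfl⟩
    exact ⟨(k, k), Bmat_self n k⟩
  · rw [eq_sub_of_add_eq' (Bmat_of_ne n hij).symm]
    exact sub_mem (hmem _) (hmem _)

end Bmat

theorem stmt_17_general (n : ℕ) [NeZero n] :
    (∀ p : Fin n × Fin n, (Bmat n p).det = 1) ∧
    LinearIndependent ℝ (Bmat n) ∧
    Submodule.span ℝ (Set.range (Bmat n)) = ⊤ := by
  have hspan := span_range_Bmat n
  refine ⟨det_Bmat n, linearIndependent_of_top_le_span_of_card_eq_finrank hspan.ge ?_, hspan⟩
  simp [Module.finrank_matrix]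

/-- Every member of `ℬ` has determinant `1`, and `ℬ` is a basis of `Mₙ(ℝ)`. -/
theorem stmt_17 (n : ℕ) [NeZero n] (hn : 3 ≤ n) :
    (∀ p : Fin n × Fin n, (Bmat n p).det = 1) ∧
    LinearIndependent ℝ (Bmat n) ∧
    Submodule.span ℝ (Set.range (Bmat n)) = ⊤ :=
  stmt_17_general n
end

section
/- Define an equivalence relation on (0,∞) by λ ∼ μ iff λ = μ^q for some nonzero rational q. A function h : ℝ* → ℝ* is a local automorphism of the multiplicative group ℝ* (i.e., for every pair λ, μ ∈ ℝ* there is a group automorphism f of ℝ* with h(λ)=f(λ), h(μ)=f(μ)) if and only if: h maps (0,∞) to itself, h(1)=1, for positive λ, μ one has λ ∼ μ ⟺ h(λ) ∼ h(μ), if λ = μ^q with q ∈ ℚ* then h(λ) = h(μ)^q, and h(-λ) = -h(λ) for every nonzero λ. -/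
open Cardinal

section LinearAlgebra

variable {K V : Type*} [DivisionRing K] [AddCommGroup V] [Module K V]

theorem Submodule.rank_eq_of_isCompl_of_finiteDimensional (hV : ℵ₀ ≤ Module.rank K V)
    {W C : Submodule K V} (hWC : IsCompl W C) [FiniteDimensional K W] :
    Module.rank K C = Module.rank K V := by
  rw [← (W.quotientEquivOfIsCompl C hWC).rank_eq]
  exact Cardinal.eq_of_add_eq_of_aleph0_le
    ((add_comm _ _).trans (rank_quotient_add_rank_of_divisionRing W))
    ((Module.rank_lt_aleph0 K W).trans_le hV) hV

theorem LinearEquiv.exists_extend_of_finiteDimensional (hV : ℵ₀ ≤ Module.rank K V)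
    {W W' : Submodule K V} [FiniteDimensional K W] [FiniteDimensional K W'] (φ : W ≃ₗ[K] W') :
    ∃ e : V ≃ₗ[K] V, ∀ x : W, e x = φ x := by
  obtain ⟨C, hC⟩ := W.exists_isCompl
  obtain ⟨C', hC'⟩ := W'.exists_isCompl
  let ψ : C ≃ₗ[K] C' := .ofRankEq _ _ <|
    (W.rank_eq_of_isCompl_of_finiteDimensional hV hC).trans
      (W'.rank_eq_of_isCompl_of_finiteDimensional hV hC').symm
  refine ⟨(W.prodEquivOfIsCompl C hC).symm ≪≫ₗ φ.prodCongr ψ ≪≫ₗ W'.prodEquivOfIsCompl C' hC',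
    fun x => ?_⟩
  simp

theorem exists_linearEquiv_apply_eq_of_sum_smul_eq_zero_iff {ι : Type*} [Fintype ι]
    (hV : ℵ₀ ≤ Module.rank K V) {v v' : ι → V}
    (hvv' : ∀ c : ι → K, ∑ i, c i • v i = 0 ↔ ∑ i, c i • v' i = 0) :
    ∃ e : V ≃ₗ[K] V, ∀ i, e (v i) = v' i := by
  classical
  set L := Fintype.linearCombination K v
  set L' := Fintype.linearCombination K v'
  have hker : LinearMap.ker L = LinearMap.ker L' := by
    ext c; simp [L, L', Fintype.linearCombination_apply, hvv']
  obtain ⟨e, he⟩ := LinearEquiv.exists_extend_of_finiteDimensional hV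
    (L.quotKerEquivRange.symm ≪≫ₗ Submodule.quotEquivOfEq _ _ hker ≪≫ₗ L'.quotKerEquivRange)
  refine ⟨e, fun i => ?_⟩
  have := he ⟨L (Pi.single i 1), LinearMap.mem_range_self _ _⟩
  rw [LinearEquiv.trans_apply, LinearEquiv.trans_apply,
    LinearMap.quotKerEquivRange_symm_apply_image, Submodule.mkQ_apply, Submodule.quotEquivOfEq_mk,
    LinearMap.quotKerEquivRange_apply_mk] at this
  simpa [L, L'] using this

theorem smul_add_smul_eq_zero_iff_eq_smul {s t : K} (ht : t ≠ 0) (x y : V) :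
    s • x + t • y = 0 ↔ y = -(t⁻¹ * s) • x := by
  rw [add_eq_zero_iff_eq_neg', ← eq_inv_smul_iff₀ ht, neg_smul, mul_smul, smul_neg]

theorem exists_linearEquiv_apply_eq_of_eq_smul_iff (hV : ℵ₀ ≤ Module.rank K V) {φ : V → V}
    (hφ : ∀ x y : V, ∀ q : K, y = q • x ↔ φ y = q • φ x) (x y : V) :
    ∃ e : V ≃ₗ[K] V, e x = φ x ∧ e y = φ y := by
  have hxy : ∀ s t : K, s • x + t • y = 0 ↔ s • φ x + t • φ y = 0 := by
    intro s t
    by_cases ht : t = 0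
    · by_cases hs : s = 0
      · simp [hs, ht]
      · simpa [ht, hs] using hφ y x 0
    · rw [smul_add_smul_eq_zero_iff_eq_smul ht, smul_add_smul_eq_zero_iff_eq_smul ht, hφ]
  obtain ⟨e, he⟩ := exists_linearEquiv_apply_eq_of_sum_smul_eq_zero_iff hV
    (v := ![x, y]) (v' := ![φ x, φ y]) fun c => by simpa using hxy (c 0) (c 1)
  exact ⟨e, he 0, he 1⟩

end LinearAlgebra

open Real

theorem Real.eq_rpow_iff_log_eq_mul {a b : ℝ} (ha : 0 < a) (hb : 0 < b) (r : ℝ) :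
    b = a ^ r ↔ log b = r * log a := by
  rw [← log_injOn_pos.eq_iff hb (rpow_pos_of_pos ha r), log_rpow ha]

noncomputable def logConj (f : ℝ → ℝ) (t : ℝ) : ℝ := log (f (exp t))

/-- `Real.log x = Real.log |x|`, so `expConj g` acts by `g` on `log |x|` and keeps the sign of `x`. -/
noncomputable def expConj (g : ℝ → ℝ) (x : ℝ) : ℝ := SignType.sign x * exp (g (log x))

theorem expConj_of_pos (g : ℝ → ℝ) {x : ℝ} (hx : 0 < x) : expConj g x = exp (g (log x)) := by
  simp [expConj, sign_pos hx]

theorem expConj_of_neg (g : ℝ → ℝ) {x : ℝ} (hx : x < 0) : expConj g x = -exp (g (log x)) := by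
  simp [expConj, sign_neg hx]

theorem expConj_ne_zero (g : ℝ → ℝ) {x : ℝ} (hx : x ≠ 0) : expConj g x ≠ 0 := by
  rcases hx.lt_or_gt with hx | hx
  · simp [expConj_of_neg g hx, exp_ne_zero]
  · simp [expConj_of_pos g hx, exp_ne_zero]

theorem expConj_mul (g : ℝ →+ ℝ) {x y : ℝ} (hx : x ≠ 0) (hy : y ≠ 0) :
    expConj g (x * y) = expConj g x * expConj g y := by
  simp only [expConj, sign_mul, SignType.coe_mul, log_mul hx hy, map_add, exp_add]
  ring

theorem expConj_symm_expConj (g : ℝ ≃+ ℝ) {x : ℝ} (hx : x ≠ 0) :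
    expConj g.symm (expConj g x) = x := by
  rcases hx.lt_or_gt with hx | hx
  · rw [expConj_of_neg _ hx, expConj_of_neg _ (neg_neg_of_pos (exp_pos _)), log_neg_eq_log,
      log_exp, g.symm_apply_apply, exp_log_of_neg hx, neg_neg]
  · rw [expConj_of_pos _ hx, expConj_of_pos _ (exp_pos _), log_exp, g.symm_apply_apply,
      exp_log hx]

theorem isMulAutoRStar_expConj (g : ℝ ≃+ ℝ) : IsMulAutoRStar (expConj g) := by
  have hmaps : ∀ g : ℝ → ℝ, Set.MapsTo (expConj g) {x | x ≠ 0} {x | x ≠ 0} :=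
    fun g _ hx => expConj_ne_zero g hx
  refine ⟨Set.InvOn.bijOn (f' := expConj g.symm) ⟨fun x hx => expConj_symm_expConj g hx,
    fun y hy => by simpa using expConj_symm_expConj g.symm hy⟩ (hmaps _) (hmaps _),
    fun x y hx hy => expConj_mul g.toAddMonoidHom hx hy⟩

theorem apply_eq_expConj {h g : ℝ → ℝ} (hpos : ∀ x : ℝ, 0 < x → 0 < h x)
    (hodd : ∀ x : ℝ, x ≠ 0 → h (-x) = -h x) {x : ℝ} (hx : x ≠ 0)
    (hg : g (log x) = logConj h (log x)) : h x = expConj g x := by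
  rcases hx.lt_or_gt with hx | hx
  · rw [expConj_of_neg _ hx, hg, logConj, exp_log (hpos _ (exp_pos _)), exp_log_of_neg hx,
      hodd _ hx.ne, neg_neg]
  · rw [expConj_of_pos _ hx, hg, logConj, exp_log (hpos _ (exp_pos _)), exp_log hx]

namespace IsMulAutoRStar

variable {f : ℝ → ℝ}

theorem map_ne_zero (hf : IsMulAutoRStar f) {x : ℝ} (hx : x ≠ 0) : f x ≠ 0 := hf.1.mapsTo hx

theorem map_pos (hf : IsMulAutoRStar f) {x : ℝ} (hx : 0 < x) : 0 < f x := by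
  have hsqrt : √x ≠ 0 := (sqrt_pos.2 hx).ne'
  rw [← mul_self_sqrt hx.le, hf.2 _ _ hsqrt hsqrt]
  exact mul_self_pos.2 (hf.map_ne_zero hsqrt)

theorem map_one (hf : IsMulAutoRStar f) : f 1 = 1 := by
  have h := hf.2 1 1 one_ne_zero one_ne_zero
  rwa [mul_one, eq_comm, mul_eq_left₀ (hf.map_ne_zero one_ne_zero)] at h

theorem map_neg_one (hf : IsMulAutoRStar f) : f (-1) = -1 := by
  have hsq : f (-1) * f (-1) = 1 := by
    rw [← hf.2 _ _ (by norm_num) (by norm_num), neg_one_mul, neg_neg, hf.map_one]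
  refine (mul_self_eq_one_iff.1 hsq).resolve_left fun h1 => ?_
  have := hf.1.injOn (by norm_num : (-1 : ℝ) ≠ 0) (by norm_num : (1 : ℝ) ≠ 0)
    (h1.trans hf.map_one.symm)
  norm_num at this

theorem map_neg (hf : IsMulAutoRStar f) {x : ℝ} (hx : x ≠ 0) : f (-x) = -f x := by
  rw [← neg_one_mul, hf.2 _ _ (by norm_num) hx, hf.map_neg_one, neg_one_mul]

theorem logConj_add (hf : IsMulAutoRStar f) (s t : ℝ) :
    logConj f (s + t) = logConj f s + logConj f t := by
  rw [logConj, exp_add, hf.2 _ _ (exp_ne_zero s) (exp_ne_zero t),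
    log_mul (hf.map_ne_zero (exp_ne_zero s)) (hf.map_ne_zero (exp_ne_zero t))]
  rfl

theorem exp_logConj_log (hf : IsMulAutoRStar f) {x : ℝ} (hx : 0 < x) :
    exp (logConj f (log x)) = f x := by
  rw [logConj, exp_log hx, exp_log (hf.map_pos hx)]

theorem map_rpow_ratCast (hf : IsMulAutoRStar f) {x : ℝ} (hx : 0 < x) (q : ℚ) :
    f (x ^ (q : ℝ)) = f x ^ (q : ℝ) := by
  have hq := map_rat_smul (AddMonoidHom.mk' (logConj f) hf.logConj_add) q (log x)
  simp only [AddMonoidHom.mk'_apply, Rat.smul_def] at hq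
  rw [← hf.exp_logConj_log (rpow_pos_of_pos hx _), ← hf.exp_logConj_log hx, log_rpow hx,
    rpow_def_of_pos (exp_pos _), log_exp, hq, mul_comm]

theorem eq_rpow_ratCast_iff (hf : IsMulAutoRStar f) {x y : ℝ} (hx : 0 < x) (hy : 0 < y) (q : ℚ) :
    y = x ^ (q : ℝ) ↔ f y = f x ^ (q : ℝ) := by
  rw [← hf.map_rpow_ratCast hx]
  exact (hf.1.injOn.eq_iff hy.ne' (rpow_pos_of_pos hx _).ne').symm

end IsMulAutoRStar

section LocalAutomorphism

variable {h : ℝ → ℝ}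

theorem eq_rpow_ratCast_iff_of_powerEquiv (hpos : ∀ x : ℝ, 0 < x → 0 < h x) (hone : h 1 = 1)
    (hrel : ∀ x y : ℝ, 0 < x → 0 < y →
      ((∃ q : ℚ, q ≠ 0 ∧ x = y ^ (q : ℝ)) ↔ (∃ q : ℚ, q ≠ 0 ∧ h x = h y ^ (q : ℝ))))
    (hhom : ∀ x y : ℝ, 0 < x → 0 < y → ∀ q : ℚ, q ≠ 0 → x = y ^ (q : ℝ) → h x = h y ^ (q : ℝ))
    {x y : ℝ} (hx : 0 < x) (hy : 0 < y) (q : ℚ) :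
    y = x ^ (q : ℝ) ↔ h y = h x ^ (q : ℝ) := by
  have eq_one : ∀ z, 0 < z → h z = 1 → z = 1 := fun z hz hz1 => by
    obtain ⟨q, -, hq⟩ := (hrel z 1 hz one_pos).2 ⟨1, one_ne_zero, by simp [hz1, hone]⟩
    simpa using hq
  rcases eq_or_ne q 0 with rfl | hq
  · simp only [Rat.cast_zero, rpow_zero]
    exact ⟨fun hy1 => hy1 ▸ hone, eq_one y hy⟩
  refine ⟨hhom y x hy hx q hq, fun hyx => ?_⟩
  rcases eq_or_ne (h x) 1 with hx1 | hx1
  · rw [eq_one x hx hx1, eq_one y hy (by rw [hyx, hx1, one_rpow]), one_rpow]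
  obtain ⟨q', hq', hyx'⟩ := (hrel y x hy hx).2 ⟨q, hq, hyx⟩
  have hqq' : (q : ℝ) = q' :=
    (rpow_right_inj (hpos x hx) hx1).1 (hyx.symm.trans (hhom y x hy hx q' hq' hyx'))
  rwa [hqq']

theorem logConj_eq_smul_iff (hpos : ∀ x : ℝ, 0 < x → 0 < h x)
    (h_rpow : ∀ {x y : ℝ}, 0 < x → 0 < y → ∀ q : ℚ, y = x ^ (q : ℝ) ↔ h y = h x ^ (q : ℝ))
    (s t : ℝ) (q : ℚ) : t = q • s ↔ logConj h t = q • logConj h s := by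
  have := h_rpow (exp_pos s) (exp_pos t) q
  rwa [eq_rpow_iff_log_eq_mul (exp_pos s) (exp_pos t),
    eq_rpow_iff_log_eq_mul (hpos _ (exp_pos s)) (hpos _ (exp_pos t)), log_exp, log_exp] at this

end LocalAutomorphism

/-- Characterization of the local automorphisms of `ℝ*`: `h` can be interpolated at any
two nonzero points by automorphisms of `ℝ*` iff `h` maps `(0,∞)` to itself, `h 1 = 1`,
`h` preserves the power-equivalence relation `λ ∼ μ ⟺ λ = μ^q` (`q ∈ ℚ*`) on `(0,∞)`
in both directions, is `ℚ`-power homogeneous there, and is odd. -/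
theorem stmt_19 (h : ℝ → ℝ) :
    (∀ lam μ : ℝ, lam ≠ 0 → μ ≠ 0 →
      ∃ f : ℝ → ℝ, IsMulAutoRStar f ∧ h lam = f lam ∧ h μ = f μ) ↔
    ((∀ lam : ℝ, 0 < lam → 0 < h lam) ∧
      h 1 = 1 ∧
      (∀ lam μ : ℝ, 0 < lam → 0 < μ →
        ((∃ q : ℚ, q ≠ 0 ∧ lam = μ ^ (q : ℝ)) ↔
          (∃ q : ℚ, q ≠ 0 ∧ h lam = h μ ^ (q : ℝ)))) ∧
      (∀ lam μ : ℝ, 0 < lam → 0 < μ → ∀ q : ℚ, q ≠ 0 →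
        lam = μ ^ (q : ℝ) → h lam = h μ ^ (q : ℝ)) ∧
      (∀ lam : ℝ, lam ≠ 0 → h (-lam) = -h lam)) := by
  constructor
  · intro H
    refine ⟨fun x hx => ?_, ?_, fun x y hx hy => ?_, fun x y hx hy q _ => ?_, fun x hx => ?_⟩
    · obtain ⟨f, hf, hfx, -⟩ := H x x hx.ne' hx.ne'
      exact hfx ▸ hf.map_pos hx
    · obtain ⟨f, hf, hf1, -⟩ := H 1 1 one_ne_zero one_ne_zero
      exact hf1 ▸ hf.map_one
    · obtain ⟨f, hf, hfx, hfy⟩ := H x y hx.ne' hy.ne'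
      simp only [hfx, hfy, hf.eq_rpow_ratCast_iff hy hx]
    · obtain ⟨f, hf, hfx, hfy⟩ := H x y hx.ne' hy.ne'
      rw [hfx, hfy]
      exact (hf.eq_rpow_ratCast_iff hy hx q).1
    · obtain ⟨f, hf, hfx, hfy⟩ := H (-x) x (neg_ne_zero.2 hx) hx
      rw [hfx, hfy, hf.map_neg hx]
  · rintro ⟨hpos, hone, hrel, hhom, hodd⟩ x y hx hy
    have hrank : ℵ₀ ≤ Module.rank ℚ ℝ := Real.rank_rat_real ▸ aleph0_le_continuum
    obtain ⟨e, hex, hey⟩ := exists_linearEquiv_apply_eq_of_eq_smul_iff hrank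
      (logConj_eq_smul_iff hpos (eq_rpow_ratCast_iff_of_powerEquiv hpos hone hrel hhom))
      (log x) (log y)
    exact ⟨expConj e, isMulAutoRStar_expConj e.toAddEquiv, apply_eq_expConj hpos hodd hx hex,
      apply_eq_expConj hpos hodd hy hey⟩
end
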